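/- Let k ≥ 2, let P be a finite poset excluding k+k, with height h and maximum chain C = {c_1 < … < c_h}. For 0 ≤ i ≤ h, the set Ar(i,i+1) = {z ∈ P − C : dn(z) ≤ i and up(z) ≥ i+1} induces a convex subposet of P of height at most 4k−4. -/

import Mathlib

variable {α : Type*}

/-- A linear extension of a partial order, given as a binary relation. -/
def IsLinExt [PartialOrder α] (r : α → α → Prop) : Prop :=
  IsLinearOrder α r ∧ ∀ x y : α, x ≤ y → r x y

/-- A realizer: a family of linear extensions whose intersection is the order. -/
def IsRealizer [PartialOrder α] {d : ℕ} (L : Fin d → α → α → Prop) : Prop :=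
  (∀ i, IsLinExt (L i)) ∧ ∀ x y : α, x ≤ y ↔ ∀ i, L i x y

/-- The order dimension of a poset: the least positive `d` admitting a realizer of size `d`. -/
noncomputable def pdim (α : Type*) [PartialOrder α] : ℕ :=
  sInf {d | 0 < d ∧ ∃ L : Fin d → α → α → Prop, IsRealizer L}

/-- The set of (ordered) incomparable pairs of a poset. -/
def IncPairs (α : Type*) [PartialOrder α] : Set (α × α) :=
  {p | ¬ p.1 ≤ p.2 ∧ ¬ p.2 ≤ p.1}

/-- `r` reverses every pair `(x, y)` in `S`, i.e. `x > y` in `r`. -/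
def Reverses [PartialOrder α] (r : α → α → Prop) (S : Set (α × α)) : Prop :=
  ∀ p ∈ S, r p.2 p.1 ∧ ¬ r p.1 p.2

/-- A set of incomparable pairs is reversible if some linear extension reverses all of them. -/
def Reversible [PartialOrder α] (S : Set (α × α)) : Prop :=
  ∃ r, IsLinExt r ∧ Reverses r S

/-- `d` linear extensions suffice to reverse every pair of `S` (i.e. `dim S ≤ d`). -/
def RealizerOn [PartialOrder α] (d : ℕ) (S : Set (α × α)) : Prop :=
  ∃ L : Fin d → α → α → Prop, (∀ i, IsLinExt (L i)) ∧
    ∀ p ∈ S, ∃ i, L i p.2 p.1 ∧ ¬ L i p.1 p.2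

/-- The height of a subset of a poset: the maximum size of a chain contained in it. -/
noncomputable def heightSet [PartialOrder α] (S : Set α) : ℕ :=
  sSup {n | ∃ t : Finset α, ↑t ⊆ S ∧ IsChain (· ≤ ·) (↑t : Set α) ∧ t.card = n}

/-- The height of a poset: the maximum size of a chain. -/
noncomputable def pheight (α : Type*) [PartialOrder α] : ℕ :=
  heightSet (Set.univ : Set α)

/-- The poset `k + k`: the disjoint sum of two `k`-element chains. -/
def TwoChains (k : ℕ) : Type := Fin k ⊕ Fin k

def TwoChains.le {k : ℕ} : TwoChains k → TwoChains k → Prop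
  | .inl i, .inl j => i.1 ≤ j.1
  | .inr i, .inr j => i.1 ≤ j.1
  | _, _ => False

theorem TwoChains.le_refl' {k : ℕ} (x : TwoChains k) : TwoChains.le x x := by
  cases x <;> simp [TwoChains.le]

theorem TwoChains.le_trans' {k : ℕ} (x y z : TwoChains k)
    (hxy : TwoChains.le x y) (hyz : TwoChains.le y z) : TwoChains.le x z := by
  cases x <;> cases y <;> cases z <;> simp_all [TwoChains.le] <;> omega

theorem TwoChains.le_antisymm' {k : ℕ} (x y : TwoChains k)
    (hxy : TwoChains.le x y) (hyx : TwoChains.le y x) : x = y := by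
  cases x <;> cases y <;> simp_all [TwoChains.le] <;>
    exact congrArg _ (le_antisymm hxy hyx)

instance (k : ℕ) : PartialOrder (TwoChains k) where
  le := TwoChains.le
  le_refl := TwoChains.le_refl'
  le_trans := TwoChains.le_trans'
  le_antisymm := TwoChains.le_antisymm'

/-- Given a chain `c : Fin h → α` (listing `c_1 < ⋯ < c_h`), `dnN c z` is the greatest
1-based index `i` with `c_i ≤ z`, and `0` if there is none. -/
noncomputable def dnN [PartialOrder α] {h : ℕ} (c : Fin h → α) (z : α) : ℕ :=
  {i : Fin h | c i ≤ z}.ncard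

/-- `upN c z` is the least 1-based index `j` with `z ≤ c_j`, and `h + 1` if there is none. -/
noncomputable def upN [PartialOrder α] {h : ℕ} (c : Fin h → α) (z : α) : ℕ :=
  h + 1 - {i : Fin h | z ≤ c i}.ncard

/-- A pair `(x, y)` is dangerous when `dn(x) < dn(y) < up(x) < up(y)`. -/
def Dangerous [PartialOrder α] {h : ℕ} (c : Fin h → α) (p : α × α) : Prop :=
  dnN c p.1 < dnN c p.2 ∧ dnN c p.2 < upN c p.1 ∧ upN c p.1 < upN c p.2

/-- `Dn(i)`: points outside the chain whose down-index is exactly `i`. -/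
def Dn [PartialOrder α] {h : ℕ} (c : Fin h → α) (i : ℕ) : Set α :=
  {z | z ∉ Set.range c ∧ dnN c z = i}

/-- `Ar(i, i+1)`: points outside the chain with `dn(z) ≤ i` and `up(z) ≥ i + 1`. -/
def Ar [PartialOrder α] {h : ℕ} (c : Fin h → α) (i : ℕ) : Set α :=
  {z | z ∉ Set.range c ∧ dnN c z ≤ i ∧ i + 1 ≤ upN c z}

/-!
Let `z₁ < ⋯ < zₘ` be a chain in `Ar(i, i+1)` and index `C` from `1`. Excluding `k + k`
forces `up(z₁) ≤ dn(z_k) + k`, since otherwise `z₁, …, z_k` are incomparable with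
`c_{dn(z_k)+1}, …, c_{dn(z_k)+k}`; likewise the top `k` elements of the chain are
incomparable with `c_{up(z₁)}, …, c_{up(z₁)+k-1}` unless `up(z_{m-k+1}) ≤ up(z₁) + k - 1`.
Replacing the elements `c_j`, `dn(z_k) < j < up(z_{m-k+1})`, of the maximum chain `C` by
`z_k, …, z_{m-k+1}` gives a chain, so `m - 2k + 2 ≤ up(z_{m-k+1}) - dn(z_k) - 1 ≤ 2k - 2`.
-/

open Finset

lemma Fin.mem_iff_lt_ncard_of_isLowerSet {n : ℕ} {S : Set (Fin n)} (hS : IsLowerSet S)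
    (j : Fin n) : j ∈ S ↔ (j : ℕ) < S.ncard := by
  constructor
  · intro hj
    have := Set.ncard_le_ncard fun a (ha : a ∈ Set.Iic j) => hS ha hj
    rw [← Finset.coe_Iic, Set.ncard_coe_finset, Fin.card_Iic] at this
    omega
  · intro hj
    by_contra hjS
    have := Set.ncard_le_ncard (t := Set.Iio j) fun a ha => lt_of_not_ge fun hja => hjS (hS hja ha)
    rw [← Finset.coe_Iio, Set.ncard_coe_finset, Fin.card_Iio] at this
    omega

lemma IsChain.exists_strictMono_fin [PartialOrder α] {t : Finset α}
    (ht : IsChain (· ≤ ·) (t : Set α)) :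
    ∃ z : Fin t.card → α, StrictMono z ∧ ∀ j, z j ∈ t := by
  classical
  let := ht.linearOrder
  let e := monoEquivOfFin (t : Set α) (by simp : Fintype.card (t : Set α) = t.card)
  exact ⟨fun j => e j, fun a b hab => e.strictMono hab, fun j => (e j).2⟩

lemma TwoChains.nonempty_orderEmbedding [PartialOrder α] {k : ℕ} {f g : Fin k → α}
    (hf : StrictMono f) (hg : StrictMono g) (hfg : ∀ a b, ¬ f a ≤ g b)
    (hgf : ∀ a b, ¬ g a ≤ f b) : Nonempty (TwoChains k ↪o α) := by
  refine ⟨OrderEmbedding.ofMapLEIff (Sum.elim f g) ?_⟩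
  rintro (a | a) (b | b)
  · exact hf.le_iff_le
  · exact iff_of_false (hfg a b) id
  · exact iff_of_false (hgf a b) id
  · exact hg.le_iff_le

lemma heightSet_le [PartialOrder α] {S : Set α} {n : ℕ}
    (hS : ∀ t : Finset α, ↑t ⊆ S → IsChain (· ≤ ·) (t : Set α) → t.card ≤ n) :
    heightSet S ≤ n :=
  csSup_le ⟨0, ∅, by simp, by simp, rfl⟩ fun _ ⟨t, htS, ht, htn⟩ => htn ▸ hS t htS ht

lemma IsChain.card_le_pheight [PartialOrder α] [Fintype α] {t : Finset α}
    (ht : IsChain (· ≤ ·) (t : Set α)) : t.card ≤ pheight α :=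
  le_csSup ⟨Fintype.card α, by rintro _ ⟨s, -, -, rfl⟩; exact card_le_univ s⟩
    ⟨t, Set.subset_univ _, ht, rfl⟩

section Chain

variable [PartialOrder α] {h : ℕ} {c : Fin h → α}

lemma upN_le_add_one (z : α) : upN c z ≤ h + 1 := Nat.sub_le _ _

lemma monotone_dnN : Monotone (dnN c) := fun _ _ hxy =>
  Set.ncard_le_ncard fun _ hj => le_trans hj hxy

lemma monotone_upN : Monotone (upN c) := fun _ _ hxy =>
  Nat.sub_le_sub_left (Set.ncard_le_ncard fun _ hj => le_trans hxy hj) _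

lemma chain_le_iff_lt_dnN (hc : StrictMono c) {z : α} {j : Fin h} :
    c j ≤ z ↔ (j : ℕ) < dnN c z :=
  Fin.mem_iff_lt_ncard_of_isLowerSet (fun _ _ hab hb => (hc.monotone hab).trans hb) j

lemma le_chain_iff_upN_le (hc : StrictMono c) {z : α} {j : Fin h} :
    z ≤ c j ↔ upN c z ≤ (j : ℕ) + 1 := by
  set S := {i : Fin h | z ≤ c i}
  have hS : IsUpperSet S := fun _ _ hab ha => ha.trans (hc.monotone hab)
  have hcompl : Sᶜ.ncard = h - S.ncard := by
    rw [Set.ncard_compl, Nat.card_eq_fintype_card, Fintype.card_fin]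
  have hSh : S.ncard ≤ h := by
    simpa [Set.ncard_univ] using Set.ncard_le_ncard (Set.subset_univ S)
  have hmem : j ∈ S ↔ ¬ (j : ℕ) < h - S.ncard := by
    rw [← hcompl, ← Fin.mem_iff_lt_ncard_of_isLowerSet hS.compl, Set.mem_compl_iff, not_not]
  change j ∈ S ↔ h + 1 - S.ncard ≤ (j : ℕ) + 1
  rw [hmem]
  omega

lemma ordConnected_Ar (hc : StrictMono c) (i : ℕ) : (Ar c i).OrdConnected := by
  refine ⟨fun x ⟨_, _, hx⟩ z ⟨_, hz, _⟩ y ⟨hxy, hyz⟩ =>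
    ⟨?_, (monotone_dnN hyz).trans hz, hx.trans (monotone_upN hxy)⟩⟩
  rintro ⟨j, rfl⟩
  have := (chain_le_iff_lt_dnN hc).1 hyz
  have := (le_chain_iff_upN_le hc).1 hxy
  omega

lemma nonempty_twoChains_of_gap (hc : StrictMono c) {k : ℕ} {w : Fin k → α}
    (hw : StrictMono w) {s : ℕ} (hdn : ∀ a, dnN c (w a) ≤ s)
    (hup : ∀ a, s + k < upN c (w a)) :
    Nonempty (TwoChains k ↪o α) := by
  have hlt (b : Fin k) : s + b < h := by
    have := hup b
    have := upN_le_add_one (c := c) (w b)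
    omega
  refine TwoChains.nonempty_orderEmbedding hw (g := fun b => c ⟨s + b, hlt b⟩)
    (fun a b hab => hc (Fin.mk_lt_mk.2 (Nat.add_lt_add_left hab s))) (fun a b hle => ?_)
    (fun a b hle => ?_)
  · have := (le_chain_iff_upN_le hc).1 hle
    have := hup a
    rw [Fin.val_mk] at *
    omega
  · have := (chain_le_iff_lt_dnN hc).1 hle
    have := hdn b
    rw [Fin.val_mk] at *
    omega

lemma card_le_of_le_dnN_of_upN_le (hc : StrictMono c)
    (hmax : ∀ t : Finset α, IsChain (· ≤ ·) (t : Set α) → t.card ≤ h)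
    {t : Finset α} (ht : IsChain (· ≤ ·) (t : Set α)) (hout : ∀ w ∈ t, w ∉ Set.range c)
    {a b : ℕ} (hdn : ∀ w ∈ t, a ≤ dnN c w) (hup : ∀ w ∈ t, upN c w ≤ b) :
    t.card ≤ b - 1 - a := by
  classical
  set kept := fun j : Fin h => (j : ℕ) < a ∨ b ≤ j + 1
  have hchain : IsChain (· ≤ ·) (↑((univ.filter kept).image c ∪ t) : Set α) := by
    refine coe_union _ t ▸ isChain_union.2 ⟨?_, ht, ?_⟩
    · rw [coe_image]
      exact hc.monotone.isChain_image (isChain_of_trichotomous _)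
    · rintro _ hx w hw -
      obtain ⟨j, hj, rfl⟩ := mem_image.1 hx
      rcases (mem_filter.1 hj).2 with hja | hjb
      · exact Or.inl ((chain_le_iff_lt_dnN hc).2 (hja.trans_le (hdn w hw)))
      · exact Or.inr ((le_chain_iff_upN_le hc).2 ((hup w hw).trans hjb))
  have hdisj : Disjoint ((univ.filter kept).image c) t := by
    refine disjoint_left.2 fun x hx hxt => hout x hxt ?_
    obtain ⟨j, -, rfl⟩ := mem_image.1 hx
    exact ⟨j, rfl⟩
  have hremoved : (univ.filter fun j => ¬ kept j).card ≤ b - 1 - a :=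
    calc _ ≤ (Ico a (b - 1)).card :=
          card_le_card_of_injOn Fin.val (fun j hj => by simp [kept] at hj ⊢; omega)
            Fin.val_injective.injOn
      _ = b - 1 - a := Nat.card_Ico _ _
  have hsplit := card_filter_add_card_filter_not (s := univ) kept
  have := hmax _ hchain
  rw [card_union_of_disjoint hdisj, card_image_of_injective _ hc.injective] at this
  rw [card_univ, Fintype.card_fin] at hsplit
  omega

lemma strictMono_fin_shift {k m : ℕ} (o : ℕ) (h : o + k ≤ m) :
    StrictMono fun a : Fin k => (⟨o + a, by omega⟩ : Fin m) :=
  fun _ _ hab => Fin.mk_lt_mk.2 (Nat.add_lt_add_left hab o)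

lemma length_le_of_strictMono_mem_Ar (hc : StrictMono c)
    (hmax : ∀ t : Finset α, IsChain (· ≤ ·) (t : Set α) → t.card ≤ h) {k : ℕ}
    (hexc : ¬ Nonempty (TwoChains k ↪o α)) {i m : ℕ} {z : Fin m → α} (hz : StrictMono z)
    (hzAr : ∀ j, z j ∈ Ar c i) : m ≤ 4 * k - 4 := by
  have hk : k ≠ 0 := by
    rintro rfl
    exact hexc (TwoChains.nonempty_orderEmbedding (f := Fin.elim0) (g := Fin.elim0)
      (fun a => a.elim0) (fun a => a.elim0) (fun a => a.elim0) (fun a => a.elim0))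
  by_contra! hm
  let O : Fin m := ⟨0, by omega⟩
  let A : Fin m := ⟨k - 1, by omega⟩
  let B : Fin m := ⟨m - k, by omega⟩
  have hdn (j : Fin m) : dnN c (z j) ≤ i := (hzAr j).2.1
  have hup (j : Fin m) : i + 1 ≤ upN c (z j) := (hzAr j).2.2
  have head : upN c (z O) ≤ dnN c (z A) + k := by
    by_contra! H
    have hw := hz.comp (strictMono_fin_shift (k := k) 0 (by omega))
    refine hexc (nonempty_twoChains_of_gap hc hw (s := dnN c (z A)) (fun a => ?_) (fun a => ?_))
    · exact monotone_dnN (hz.monotone (Fin.mk_le_mk.2 (by omega)))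
    · exact H.trans_le (monotone_upN (hz.monotone (Fin.mk_le_mk.2 (by omega))))
  have tail : upN c (z B) ≤ upN c (z O) + k - 1 := by
    by_contra! H
    have := hup O
    have hw := hz.comp (strictMono_fin_shift (k := k) (m - k) (by omega))
    refine hexc (nonempty_twoChains_of_gap hc hw (s := upN c (z O) - 1)
      (fun a => (hdn _).trans (by omega)) (fun a => ?_))
    exact lt_of_lt_of_le (by omega : upN c (z O) - 1 + k < upN c (z B))
      (monotone_upN (hz.monotone (Fin.mk_le_mk.2 (by omega))))
  have middle : m + 2 - 2 * k ≤ upN c (z B) - 1 - dnN c (z A) := by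
    have hw := hz.comp (strictMono_fin_shift (k := m + 2 - 2 * k) (k - 1) (by omega))
    have := card_le_of_le_dnN_of_upN_le hc hmax (t := univ.map ⟨_, hw.injective⟩)
      (a := dnN c (z A)) (b := upN c (z B))
      (by rw [coe_map, coe_univ, Set.image_univ]; exact hw.monotone.isChain_range)
      (forall_mem_map.2 fun a _ => (hzAr _).1)
      (forall_mem_map.2 fun a _ => monotone_dnN (hz.monotone (Fin.mk_le_mk.2 (by omega))))
      (forall_mem_map.2 fun a _ => monotone_upN (hz.monotone (Fin.mk_le_mk.2 (by omega))))
    rwa [card_map, card_univ, Fintype.card_fin] at this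
  omega

end Chain

theorem ar_convex_height_le_general {α : Type*} [PartialOrder α] [Fintype α] (k : ℕ)
    (hexc : ¬ Nonempty (TwoChains k ↪o α))
    (c : Fin (pheight α) → α) (hc : StrictMono c)
    (i : ℕ) :
    (Ar c i).OrdConnected ∧ heightSet (Ar c i) ≤ 4 * k - 4 := by
  refine ⟨ordConnected_Ar hc i, heightSet_le fun t htAr ht => ?_⟩
  obtain ⟨z, hz, hzt⟩ := ht.exists_strictMono_fin
  exact length_le_of_strictMono_mem_Ar hc (fun s hs => hs.card_le_pheight) hexc hz
    fun j => htAr (hzt j)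

/-- If `P` excludes `k + k` and `C` is a maximum chain, then for `0 ≤ i ≤ h` the set
`Ar(i, i+1)` is convex and has height at most `4k − 4`. -/
theorem ar_convex_height_le {α : Type*} [PartialOrder α] [Fintype α] (k : ℕ) (hk : 2 ≤ k)
    (hexc : ¬ Nonempty (TwoChains k ↪o α))
    (c : Fin (pheight α) → α) (hc : StrictMono c)
    (i : ℕ) (hi : i ≤ pheight α) :
    (Ar c i).OrdConnected ∧ heightSet (Ar c i) ≤ 4 * k - 4 :=
  ar_convex_height_le_general k hexc c hc i
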